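/- arXiv:2103.06436 — 2 statements merged into one kernel-verified Lean document; each statement's English description precedes it below -/
import Mathlib

section
/- For 0 ≤ w < 1, with G(w) := 1 + w³ + (1−w²)K(w) − (1+w²)E(w), one has G′(w) ≤ 0, i.e., G is nonincreasing on [0,1). -/
noncomputable def ellK (w : ℝ) : ℝ := ∫ θ in (0:ℝ)..(Real.pi/2), 1 / Real.sqrt (1 - w^2 * Real.sin θ ^ 2)

noncomputable def ellE (w : ℝ) : ℝ := ∫ θ in (0:ℝ)..(Real.pi/2), Real.sqrt (1 - w^2 * Real.sin θ ^ 2)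

noncomputable def Gfun (w : ℝ) : ℝ := 1 + w^3 + (1 - w^2) * ellK w - (1 + w^2) * ellE w

/-!
Write `Δ(w, θ) = √(1 - w² sin² θ)`, so that `G(w) = 1 + w³ + ∫₀^{π/2} ((1 - w²)/Δ - (1 + w²)Δ) dθ`.
The `w`-derivative of this integrand equals `-3wΔ - w ∂_θ (sin θ cos θ / Δ)`, and the second term
integrates to zero over `[0, π/2]`. Differentiating under the integral sign therefore gives
`G'(w) = 3w² - 3wE(w) = 3w(w - E(w))`. Since `Δ ≥ cos θ`, `E(w) ≥ ∫₀^{π/2} cos θ dθ = 1 > w`,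
so `G' ≤ 0` on `[0, 1)` and `G` is antitone there by the mean value theorem.
-/

open Real Set Filter Topology Function

theorem intervalIntegral.hasDerivAt_integral_of_continuousOn_deriv
    {E : Type*} [NormedAddCommGroup E] [NormedSpace ℝ E]
    {F F' : ℝ → ℝ → E} {x₀ a b : ℝ} {U : Set ℝ} (hU : U ∈ 𝓝 x₀)
    (hF : ∀ x ∈ U, ContinuousOn (F x) (uIcc a b))
    (hF' : ContinuousOn (uncurry F') (U ×ˢ uIcc a b))
    (hderiv : ∀ x ∈ U, ∀ t ∈ uIcc a b, HasDerivAt (F · t) (F' x t) x) :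
    HasDerivAt (fun x => ∫ t in a..b, F x t) (∫ t in a..b, F' x₀ t) x₀ := by
  obtain ⟨K, hK, hKU, hKc⟩ := local_compact_nhds hU
  obtain ⟨C, hC⟩ := (hKc.prod isCompact_uIcc).exists_bound_of_continuousOn
    (hF'.mono (prod_mono hKU le_rfl))
  have hx₀ : x₀ ∈ U := mem_of_mem_nhds hU
  refine (intervalIntegral.hasDerivAt_integral_of_dominated_loc_of_deriv_le (bound := fun _ => C)
    hK ?_ ((hF x₀ hx₀).intervalIntegrable) ?_ ?_ intervalIntegrable_const ?_).2
  · filter_upwards [hU] with x hx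
    exact (hF x hx).mono uIoc_subset_uIcc |>.aestronglyMeasurable measurableSet_uIoc
  · have : ContinuousOn (F' x₀) (uIcc a b) :=
      hF'.comp (continuousOn_const.prodMk continuousOn_id) fun t ht => ⟨hx₀, ht⟩
    exact (this.mono uIoc_subset_uIcc).aestronglyMeasurable measurableSet_uIoc
  · exact Eventually.of_forall fun t ht x hx => hC (x, t) ⟨hx, uIoc_subset_uIcc ht⟩
  · exact Eventually.of_forall fun t ht x hx => hderiv x (hKU hx) t (uIoc_subset_uIcc ht)

noncomputable def ellDelta (w θ : ℝ) : ℝ := √(1 - w ^ 2 * sin θ ^ 2)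

noncomputable def Gintegrand (w θ : ℝ) : ℝ :=
  (1 - w ^ 2) / ellDelta w θ - (1 + w ^ 2) * ellDelta w θ

noncomputable def sinCosDivEllDelta (w θ : ℝ) : ℝ := sin θ * cos θ / ellDelta w θ

noncomputable def sinCosDivEllDelta' (w θ : ℝ) : ℝ :=
  (cos θ ^ 2 - sin θ ^ 2) / ellDelta w θ + w ^ 2 * sin θ ^ 2 * cos θ ^ 2 / ellDelta w θ ^ 3

noncomputable def Gintegrand' (w θ : ℝ) : ℝ := -3 * w * ellDelta w θ - w * sinCosDivEllDelta' w θ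

section

variable {w : ℝ}

lemma continuous_uncurry_ellDelta : Continuous (uncurry ellDelta) := by
  unfold ellDelta; fun_prop

lemma continuous_ellDelta (w : ℝ) : Continuous (ellDelta w) :=
  continuous_uncurry_ellDelta.comp (Continuous.prodMk_right w)

lemma ellDelta_sq (hw : w ^ 2 ≤ 1) (θ : ℝ) : ellDelta w θ ^ 2 = 1 - w ^ 2 * sin θ ^ 2 :=
  sq_sqrt (by nlinarith [sin_sq_le_one θ, sq_nonneg w, sq_nonneg (sin θ)])

lemma ellDelta_pos (hw : w ^ 2 < 1) (θ : ℝ) : 0 < ellDelta w θ :=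
  sqrt_pos.2 (by nlinarith [sin_sq_le_one θ, sq_nonneg w, sq_nonneg (sin θ)])

lemma cos_le_ellDelta (hw : w ^ 2 ≤ 1) (θ : ℝ) : cos θ ≤ ellDelta w θ :=
  le_sqrt_of_sq_le (by nlinarith [cos_sq' θ, sq_nonneg (sin θ)])

lemma one_le_ellE (hw : w ^ 2 ≤ 1) : 1 ≤ ellE w :=
  calc (1 : ℝ) = ∫ θ in (0 : ℝ)..π / 2, cos θ := by simp
    _ ≤ ∫ θ in (0 : ℝ)..π / 2, ellDelta w θ :=
      intervalIntegral.integral_mono (by positivity) (continuous_cos.intervalIntegrable _ _)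
        ((continuous_ellDelta w).intervalIntegrable _ _) (cos_le_ellDelta hw)

lemma hasDerivAt_ellDelta_modulus (hw : w ^ 2 < 1) (θ : ℝ) :
    HasDerivAt (ellDelta · θ) (-(w * sin θ ^ 2) / ellDelta w θ) w := by
  have hu : HasDerivAt (fun x => 1 - x ^ 2 * sin θ ^ 2) (-(2 * w * sin θ ^ 2)) w := by
    simpa using ((hasDerivAt_pow 2 w).mul_const (sin θ ^ 2)).const_sub 1
  have hΔ := (ellDelta_pos hw θ).ne'
  refine (hu.sqrt (sqrt_pos.1 (ellDelta_pos hw θ)).ne').congr_deriv ?_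
  unfold ellDelta at *
  field_simp

lemma hasDerivAt_ellDelta_angle (hw : w ^ 2 < 1) (θ : ℝ) :
    HasDerivAt (ellDelta w) (-(w ^ 2 * sin θ * cos θ) / ellDelta w θ) θ := by
  have hu : HasDerivAt (fun t => 1 - w ^ 2 * sin t ^ 2) (-(w ^ 2 * (2 * sin θ * cos θ))) θ := by
    simpa using (((hasDerivAt_sin θ).pow 2).const_mul (w ^ 2)).const_sub 1
  have hΔ := (ellDelta_pos hw θ).ne'
  refine (hu.sqrt (sqrt_pos.1 (ellDelta_pos hw θ)).ne').congr_deriv ?_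
  unfold ellDelta at *
  field_simp

lemma hasDerivAt_sinCosDivEllDelta (hw : w ^ 2 < 1) (θ : ℝ) :
    HasDerivAt (sinCosDivEllDelta w) (sinCosDivEllDelta' w θ) θ := by
  have hΔ := (ellDelta_pos hw θ).ne'
  have hsc : HasDerivAt (fun t => sin t * cos t) (cos θ ^ 2 - sin θ ^ 2) θ :=
    ((hasDerivAt_sin θ).mul (hasDerivAt_cos θ)).congr_deriv (by ring)
  refine (hsc.div (hasDerivAt_ellDelta_angle hw θ) hΔ).congr_deriv ?_
  rw [sinCosDivEllDelta']
  field_simp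
  ring

lemma hasDerivAt_Gintegrand (hw : w ^ 2 < 1) (θ : ℝ) :
    HasDerivAt (Gintegrand · θ) (Gintegrand' w θ) w := by
  have hΔ := (ellDelta_pos hw θ).ne'
  have h1 : HasDerivAt (fun x : ℝ => 1 - x ^ 2) (-(2 * w)) w := by
    simpa using (hasDerivAt_pow 2 w).const_sub 1
  have h2 : HasDerivAt (fun x : ℝ => 1 + x ^ 2) (2 * w) w := by
    simpa using (hasDerivAt_pow 2 w).const_add 1
  have hd := hasDerivAt_ellDelta_modulus hw θ
  refine ((h1.div hd hΔ).sub (h2.mul hd)).congr_deriv ?_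
  rw [Gintegrand', sinCosDivEllDelta', cos_sq']
  field_simp
  linear_combination (w * (ellDelta w θ ^ 2 - sin θ ^ 2)) * ellDelta_sq hw.le θ

lemma continuous_Gintegrand (hw : w ^ 2 < 1) : Continuous (Gintegrand w) :=
  (continuous_const.div (continuous_ellDelta w) fun θ => (ellDelta_pos hw θ).ne').sub
    (continuous_const.mul (continuous_ellDelta w))

lemma continuousOn_sinCosDivEllDelta' :
    ContinuousOn (uncurry sinCosDivEllDelta') {p | p.1 ^ 2 < 1} := by
  refine fun p hp => ContinuousAt.continuousWithinAt ?_
  have hΔ : ContinuousAt (fun q : ℝ × ℝ => ellDelta q.1 q.2) p :=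
    continuous_uncurry_ellDelta.continuousAt
  have hne := (ellDelta_pos hp p.2).ne'
  have hne3 := pow_ne_zero 3 hne
  simp only [uncurry_def, sinCosDivEllDelta']
  fun_prop (disch := assumption)

lemma continuous_sinCosDivEllDelta' (hw : w ^ 2 < 1) : Continuous (sinCosDivEllDelta' w) :=
  continuousOn_sinCosDivEllDelta'.comp_continuous (f := fun θ => (w, θ)) (by fun_prop) fun _ => hw

lemma continuousOn_Gintegrand' : ContinuousOn (uncurry Gintegrand') {p | p.1 ^ 2 < 1} := by
  have hΔ : Continuous (fun p : ℝ × ℝ => ellDelta p.1 p.2) := continuous_uncurry_ellDelta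
  simp only [uncurry_def, Gintegrand']
  exact ((continuous_const.mul continuous_fst).mul hΔ).continuousOn.sub
    (continuous_fst.continuousOn.mul continuousOn_sinCosDivEllDelta')

lemma integral_sinCosDivEllDelta' (hw : w ^ 2 < 1) :
    ∫ θ in (0 : ℝ)..π / 2, sinCosDivEllDelta' w θ = 0 := by
  rw [intervalIntegral.integral_eq_sub_of_hasDerivAt
    (fun θ _ => hasDerivAt_sinCosDivEllDelta hw θ)
    ((continuous_sinCosDivEllDelta' hw).intervalIntegrable _ _)]
  simp [sinCosDivEllDelta]

lemma integral_Gintegrand' (hw : w ^ 2 < 1) :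
    ∫ θ in (0 : ℝ)..π / 2, Gintegrand' w θ = -3 * w * ellE w := by
  unfold Gintegrand'
  rw [intervalIntegral.integral_sub (((continuous_ellDelta w).intervalIntegrable _ _).const_mul _)
      (((continuous_sinCosDivEllDelta' hw).intervalIntegrable _ _).const_mul _),
    intervalIntegral.integral_const_mul, intervalIntegral.integral_const_mul,
    integral_sinCosDivEllDelta' hw, mul_zero, sub_zero]
  rfl

lemma Gfun_eq_integral (hw : w ^ 2 < 1) :
    Gfun w = 1 + w ^ 3 + ∫ θ in (0 : ℝ)..π / 2, Gintegrand w θ := by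
  have hΔinv : Continuous fun θ => 1 / ellDelta w θ :=
    continuous_const.div (continuous_ellDelta w) fun θ => (ellDelta_pos hw θ).ne'
  simp_rw [Gintegrand, div_eq_mul_one_div (1 - w ^ 2)]
  rw [intervalIntegral.integral_sub ((hΔinv.intervalIntegrable _ _).const_mul _)
      (((continuous_ellDelta w).intervalIntegrable _ _).const_mul _),
    intervalIntegral.integral_const_mul, intervalIntegral.integral_const_mul, Gfun, add_sub_assoc]
  rfl

lemma hasDerivAt_Gfun (hw : w ^ 2 < 1) : HasDerivAt Gfun (3 * w * (w - ellE w)) w := by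
  have hU : {x : ℝ | x ^ 2 < 1} ∈ 𝓝 w := (isOpen_lt (by fun_prop) continuous_const).mem_nhds hw
  have hint : HasDerivAt (fun x => ∫ θ in (0 : ℝ)..π / 2, Gintegrand x θ) (-3 * w * ellE w) w := by
    rw [← integral_Gintegrand' hw]
    exact intervalIntegral.hasDerivAt_integral_of_continuousOn_deriv hU
      (fun x hx => (continuous_Gintegrand hx).continuousOn)
      (continuousOn_Gintegrand'.mono fun p hp => hp.1) fun x hx θ _ => hasDerivAt_Gintegrand hx θ
  have hpoly : HasDerivAt (fun x : ℝ => 1 + x ^ 3) (3 * w ^ 2) w := by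
    simpa using (hasDerivAt_pow 3 w).const_add 1
  refine ((hpoly.add hint).congr_of_eventuallyEq ?_).congr_deriv (by ring)
  filter_upwards [hU] with x hx using Gfun_eq_integral hx

end

theorem G_antitone :
    (∀ w ∈ Set.Ico (0:ℝ) 1, deriv Gfun w ≤ 0) ∧ AntitoneOn Gfun (Set.Ico (0:ℝ) 1) := by
  have hsq : ∀ w ∈ Ico (0 : ℝ) 1, w ^ 2 < 1 := fun w hw => by nlinarith [hw.1, hw.2]
  have hderiv : ∀ w ∈ Ico (0 : ℝ) 1, HasDerivAt Gfun (3 * w * (w - ellE w)) w :=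
    fun w hw => hasDerivAt_Gfun (hsq w hw)
  have hnonpos : ∀ w ∈ Ico (0 : ℝ) 1, 3 * w * (w - ellE w) ≤ 0 := fun w hw => by
    have := one_le_ellE (hsq w hw).le
    nlinarith [hw.1, hw.2]
  refine ⟨fun w hw => (hderiv w hw).deriv ▸ hnonpos w hw, ?_⟩
  exact antitoneOn_of_hasDerivWithinAt_nonpos (convex_Ico 0 1)
    (fun w hw => (hderiv w hw).continuousAt.continuousWithinAt)
    (fun w hw => (hderiv w (interior_subset hw)).hasDerivWithinAt)
    fun w hw => hnonpos w (interior_subset hw)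
end

section
/- Let Γ = PSL₂(ℤ) and w = x + iy in the standard fundamental domain F with y ≥ 2. Then for every γ ∈ Γ with γ ≠ 1, the hyperbolic distance satisfies ρ(w, γw) ≫ min(1, 1/Im(w)), with an absolute implied constant. More precisely, if γ has lower-left entry c ≠ 0 then Im(γw) ≤ 1/2 so ρ(w,γw) ≫ 1, and if c = 0 then γw = w ± b with b ≠ 0 and ρ(w, γw) ≫ 1/Im(w). -/
/-! If `c ≠ 0`, then `Im(γw) = y / |cw + d|² ≤ 1 / (c²y) ≤ 1 / y`, so `log Im` drops by at least
`2 log y ≥ 2 log 2` from `w` to `γw`, and `ρ` dominates differences of `log Im`.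
If `c = 0`, then `γ = ±T^b` with `b ≠ 0` since `γ ≠ ±1`, so `γw = w + b`; the estimate
`|b| ≤ y (e^ρ - 1)` then gives `ρ ≥ log (1 + 1/y) ≥ 1 / (y + 1)`. -/

open UpperHalfPlane

namespace UpperHalfPlane

theorem one_div_im_add_one_le_dist {z w : ℍ} (h : 1 ≤ dist (z : ℂ) w) :
    1 / (w.im + 1) ≤ dist z w := by
  have hy := w.im_pos
  have hexp : (w.im + 1) / w.im ≤ Real.exp (dist z w) := by
    rw [div_le_iff₀ hy]
    nlinarith [dist_coe_le z w]
  calc 1 / (w.im + 1) = 1 - ((w.im + 1) / w.im)⁻¹ := by field_simp; ring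
    _ ≤ Real.log ((w.im + 1) / w.im) := Real.one_sub_inv_le_log_of_pos (by positivity)
    _ ≤ dist z w := (Real.log_le_iff_le_exp (by positivity)).2 hexp

theorem two_mul_log_im_le_dist_of_im_le_inv {z w : ℍ} (h : w.im ≤ z.im⁻¹) :
    2 * Real.log z.im ≤ dist z w := by
  have hlog : Real.log w.im ≤ -Real.log z.im := by
    rw [← Real.log_inv]
    exact Real.log_le_log w.im_pos h
  calc 2 * Real.log z.im ≤ Real.log z.im - Real.log w.im := by linarith
    _ ≤ dist (Real.log z.im) (Real.log w.im) := (le_abs_self _).trans_eq (Real.dist_eq _ _).symm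
    _ ≤ dist z w := dist_log_im_le z w

end UpperHalfPlane

namespace ModularGroup

open Matrix Matrix.SpecialLinearGroup
open scoped MatrixGroups

variable (g : SL(2, ℤ))

theorem im_smul_le_inv_im_of_c_ne_zero (hc : g 1 0 ≠ 0) (z : ℍ) : (g • z).im ≤ z.im⁻¹ := by
  have hy := z.im_pos
  have hc2 : (1 : ℝ) ≤ (g 1 0 : ℝ) ^ 2 := by
    exact_mod_cast Int.one_le_abs hc |>.trans (by nlinarith [sq_abs (g 1 0)])
  have hdenom : ((g 1 0 : ℝ) * z.im) ^ 2 ≤ Complex.normSq (denom g z) := by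
    simpa using z.c_mul_im_sq_le_normSq_denom g
  rw [im_smul_eq_div_normSq]
  calc z.im / Complex.normSq (denom g z) ≤ z.im / ((g 1 0 : ℝ) * z.im) ^ 2 :=
        div_le_div_of_nonneg_left hy.le (by positivity) hdenom
    _ = ((g 1 0 : ℝ) ^ 2)⁻¹ * z.im⁻¹ := by field_simp
    _ ≤ z.im⁻¹ := mul_le_of_le_one_left (by positivity) (inv_le_one_of_one_le₀ hc2)

theorem exists_eq_T_zpow_or_eq_neg_T_zpow_of_c_eq_zero (hc : g 1 0 = 0) :
    ∃ n : ℤ, g = T ^ n ∨ g = -T ^ n := by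
  have had : g 0 0 * g 1 1 = 1 := by
    have := g.det_coe
    rw [det_fin_two, hc] at this
    lia
  rcases Int.eq_one_or_neg_one_of_mul_eq_one' had with ⟨ha, hd⟩ | ⟨ha, hd⟩
  · refine ⟨g 0 1, Or.inl ?_⟩
    ext i j
    fin_cases i <;> fin_cases j <;> simp [ha, hc, hd, coe_T_zpow]
  · refine ⟨-g 0 1, Or.inr ?_⟩
    ext i j
    fin_cases i <;> fin_cases j <;> simp [ha, hc, hd, coe_T_zpow]

theorem exists_ne_zero_coe_smul_eq_add_of_c_eq_zero (hc : g 1 0 = 0) (h1 : g ≠ 1) (hm1 : g ≠ -1)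
    (z : ℍ) : ∃ b : ℤ, b ≠ 0 ∧ ((g • z : ℍ) : ℂ) = z + b := by
  obtain ⟨n, hg | hg⟩ := exists_eq_T_zpow_or_eq_neg_T_zpow_of_c_eq_zero g hc <;>
    refine ⟨n, fun hn ↦ by simp_all, ?_⟩
  · rw [hg, coe_T_zpow_smul_eq]
  · rw [hg, SL_neg_smul, coe_T_zpow_smul_eq]

end ModularGroup

theorem min_one_inv_le_two_div_add_one {y : ℝ} (hy : 0 < y) : min 1 (1 / y) ≤ 2 / (y + 1) := by
  rcases le_total y 1 with h | h
  · exact (min_le_left _ _).trans (by rw [le_div_iff₀ (by linarith)]; linarith)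
  · exact (min_le_right _ _).trans (by rw [div_le_div_iff₀ hy (by linarith)]; linarith)

theorem min_spacing_high :
    ∃ c > 0, ∀ (w : UpperHalfPlane), w ∈ ModularGroup.fd → 2 ≤ w.im →
      ∀ γ : Matrix.SpecialLinearGroup (Fin 2) ℤ, γ ≠ 1 → γ ≠ -1 →
        c * min 1 (1 / w.im) ≤ dist w (γ • w) ∧
        ((γ : Matrix (Fin 2) (Fin 2) ℤ) 1 0 ≠ 0 → (γ • w).im ≤ 1 / 2) ∧
        ((γ : Matrix (Fin 2) (Fin 2) ℤ) 1 0 = 0 →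
          ∃ b : ℤ, b ≠ 0 ∧ ((γ • w : UpperHalfPlane) : ℂ) = (w : ℂ) + b) := by
  refine ⟨1 / 2, one_half_pos, fun w _ hy γ h1 hm1 ↦ ?_⟩
  by_cases hc : (γ : Matrix (Fin 2) (Fin 2) ℤ) 1 0 = 0
  · obtain ⟨b, hb, hγw⟩ :=
      ModularGroup.exists_ne_zero_coe_smul_eq_add_of_c_eq_zero γ hc h1 hm1 w
    have hshift : 1 ≤ dist ((γ • w : ℍ) : ℂ) w := by
      rw [hγw, dist_self_add_left, Complex.norm_intCast, ← Int.cast_abs]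
      exact_mod_cast Int.one_le_abs hb
    have hdist := one_div_im_add_one_le_dist hshift
    rw [dist_comm] at hdist
    refine ⟨?_, (absurd hc ·), fun _ ↦ ⟨b, hb, hγw⟩⟩
    calc 1 / 2 * min 1 (1 / w.im) ≤ 1 / 2 * (2 / (w.im + 1)) :=
          by gcongr; exact min_one_inv_le_two_div_add_one w.im_pos
      _ = 1 / (w.im + 1) := by ring
      _ ≤ dist w (γ • w) := hdist
  · have him := ModularGroup.im_smul_le_inv_im_of_c_ne_zero γ hc w
    have hinv : w.im⁻¹ ≤ 1 / 2 := by rw [inv_eq_one_div]; gcongr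
    refine ⟨?_, fun _ ↦ him.trans hinv, (absurd · hc)⟩
    have hlog : Real.log 2 ≤ Real.log w.im := Real.log_le_log two_pos hy
    calc 1 / 2 * min 1 (1 / w.im) ≤ 1 / 2 * 1 := by gcongr; exact min_le_left _ _
      _ ≤ 2 * Real.log 2 := by linarith [Real.log_two_gt_d9]
      _ ≤ dist w (γ • w) := by linarith [two_mul_log_im_le_dist_of_im_le_inv him]
end
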